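/- Let a, b > 0 with b > 1 > a, set y₂ = −(b − 1)/(a − b) and let x_k be either of ±√(y₂/a − y₂²). Then the Jacobian matrix of the CDK polynomial vector field f_{a,b} at (x_k, y₂) has strictly negative trace and strictly positive determinant; hence both its eigenvalues (real or complex) have strictly negative real part, so s₃ and s₄ are attracting stationary points. -/

import Mathlib

/-- The CDK polynomial vector field. -/
def cdk (a b : ℝ) : ℝ × ℝ → ℝ × ℝ := fun p =>
  (p.1 * p.2 - a * (p.1 ^ 3 + p.1 * p.2 ^ 2),
   p.2 ^ 2 - (b * p.2 - b + 1) * (p.1 ^ 2 + p.2 ^ 2))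

/-- The Jacobian matrix of a planar vector field at a point, expressed via the
total (Fréchet) derivative applied to the standard basis vectors. -/
noncomputable def jacobianAt (f : ℝ × ℝ → ℝ × ℝ) (p : ℝ × ℝ) : Matrix (Fin 2) (Fin 2) ℝ :=
  !![(fderiv ℝ f p (1, 0)).1, (fderiv ℝ f p (0, 1)).1;
     (fderiv ℝ f p (1, 0)).2, (fderiv ℝ f p (0, 1)).2]

/-!
At a stationary point `(x, y)` with `x ≠ 0` the field satisfies `a (x² + y²) = y` and
`b y - b + 1 = a y`. Substituting these into the Jacobian collapses its trace to `-(b / a) y`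
and its determinant to `2 x² y (b - a)`; for `b > 1 > a` one has `y₂ = (b - 1) / (b - a) > 0` and
`x² = y₂ / a - y₂² > 0`, so the trace is negative and the determinant positive. A root of
`z² - T z + D` with `T < 0 < D` has negative real part: a non-real root has real part `T / 2`,
and a real root `r ≥ 0` would give `r² - T r + D > 0`.
-/

theorem Complex.re_neg_of_sq_sub_mul_add_eq_zero {T D : ℝ} (hT : T < 0) (hD : 0 < D) {z : ℂ}
    (hz : z ^ 2 - (T : ℂ) * z + (D : ℂ) = 0) : z.re < 0 := by
  have hre : z.re * z.re - z.im * z.im - T * z.re + D = 0 := by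
    simpa [pow_two, Complex.mul_re] using congrArg Complex.re hz
  have him : z.im * (2 * z.re - T) = 0 := by
    have := congrArg Complex.im hz
    simp only [pow_two, Complex.sub_im, Complex.add_im, Complex.mul_im, Complex.ofReal_re,
      Complex.ofReal_im, Complex.zero_im] at this
    linear_combination this
  rcases mul_eq_zero.mp him with hreal | hhalf
  · rw [hreal] at hre
    nlinarith
  · linarith

theorem jacobianAt_cdk (a b : ℝ) (p : ℝ × ℝ) :
    jacobianAt (cdk a b) p =
      !![p.2 - a * (3 * p.1 ^ 2 + p.2 ^ 2), p.1 - 2 * a * p.1 * p.2;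
         -(2 * p.1 * (b * p.2 - b + 1)),
         2 * p.2 - b * (p.1 ^ 2 + p.2 ^ 2) - 2 * p.2 * (b * p.2 - b + 1)] := by
  have hx : HasFDerivAt (fun q : ℝ × ℝ => q.1) (ContinuousLinearMap.fst ℝ ℝ ℝ) p :=
    hasFDerivAt_fst
  have hy : HasFDerivAt (fun q : ℝ × ℝ => q.2) (ContinuousLinearMap.snd ℝ ℝ ℝ) p :=
    hasFDerivAt_snd
  have hf : HasFDerivAt (cdk a b) _ p :=
    ((hx.mul hy).sub (((hx.pow 3).add (hx.mul (hy.pow 2))).const_mul a)).prodMk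
      ((hy.pow 2).sub ((((hy.const_mul b).sub_const b).add_const 1).mul
        ((hx.pow 2).add (hy.pow 2))))
  rw [jacobianAt, hf.fderiv]
  congr 1
  simp only [ContinuousLinearMap.prod_apply, ContinuousLinearMap.coe_fst',
    ContinuousLinearMap.coe_snd', sub_apply, add_apply, smul_apply, smul_add, smul_eq_mul,
    nsmul_eq_mul, Nat.add_one_sub_one, Nat.cast_ofNat, pow_one, mul_zero, mul_one, zero_add,
    add_zero, zero_sub, Matrix.vecCons_inj, sub_right_inj, neg_inj, and_true]
  refine ⟨⟨?_, ?_⟩, ?_, ?_⟩ <;> ring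

section StationaryPoint

variable {a b x y : ℝ} (hcirc : a * (x ^ 2 + y ^ 2) = y) (hline : b * y - b + 1 = a * y)
include hcirc hline

theorem trace_jacobianAt_cdk_of_stationary (ha : a ≠ 0) :
    (jacobianAt (cdk a b) (x, y)).trace = -(b / a) * y := by
  rw [jacobianAt_cdk, Matrix.trace_fin_two_of]
  field_simp
  linear_combination (-3 * a - b) * hcirc - 2 * a * y * hline

theorem det_jacobianAt_cdk_of_stationary :
    (jacobianAt (cdk a b) (x, y)).det = 2 * x ^ 2 * y * (b - a) := by
  rw [jacobianAt_cdk, Matrix.det_fin_two_of]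
  simp only [hline]
  linear_combination (3 * b * x ^ 2 + b * y ^ 2 - 2 * y + 2 * a * y ^ 2) * hcirc

end StationaryPoint

section S34

variable {a b : ℝ}

theorem cdk_s34_y_pos (ha1 : a < 1) (hb1 : 1 < b) : 0 < -(b - 1) / (a - b) :=
  div_pos_of_neg_of_neg (by linarith) (by linarith)

theorem cdk_s34_line (hab : a ≠ b) :
    b * (-(b - 1) / (a - b)) - b + 1 = a * (-(b - 1) / (a - b)) := by
  field_simp [sub_ne_zero.2 hab]
  ring

theorem cdk_s34_radicand_pos (ha : 0 < a) (ha1 : a < 1) (hb1 : 1 < b) :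
    0 < -(b - 1) / (a - b) / a - (-(b - 1) / (a - b)) ^ 2 := by
  have hba : 0 < b - a := by linarith
  have hfactor : -(b - 1) / (a - b) / a - (-(b - 1) / (a - b)) ^ 2
      = (b - 1) * b * (1 - a) / (a * (b - a) ^ 2) := by
    rw [← neg_sub b a, neg_div_neg_eq]
    field_simp
    ring
  rw [hfactor]
  exact div_pos (mul_pos (mul_pos (by linarith) (by linarith)) (by linarith)) (by positivity)

end S34

theorem cdk_s34_attracting_general (a b : ℝ) (ha : 0 < a)
    (hab : 1 < b ∧ a < 1)
    (y₂ : ℝ) (hy₂ : y₂ = -(b - 1) / (a - b)) (xk : ℝ)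
    (hxk : xk = Real.sqrt (y₂ / a - y₂ ^ 2) ∨ xk = -Real.sqrt (y₂ / a - y₂ ^ 2)) :
    (jacobianAt (cdk a b) (xk, y₂)).trace < 0 ∧
    0 < (jacobianAt (cdk a b) (xk, y₂)).det ∧
      ∀ z : ℂ, z ^ 2 - ((jacobianAt (cdk a b) (xk, y₂)).trace : ℂ) * z
          + ((jacobianAt (cdk a b) (xk, y₂)).det : ℂ) = 0 → z.re < 0 := by
  obtain ⟨hb1, ha1⟩ := hab
  have hy : 0 < y₂ := hy₂ ▸ cdk_s34_y_pos ha1 hb1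
  have hline : b * y₂ - b + 1 = a * y₂ := hy₂ ▸ cdk_s34_line (by linarith)
  have hrad : 0 < y₂ / a - y₂ ^ 2 := hy₂ ▸ cdk_s34_radicand_pos ha ha1 hb1
  have hx : xk ^ 2 = y₂ / a - y₂ ^ 2 := by
    rcases hxk with rfl | rfl <;> simp [Real.sq_sqrt hrad.le]
  have hcirc : a * (xk ^ 2 + y₂ ^ 2) = y₂ := by
    rw [hx]
    field_simp
    ring
  have htr : (jacobianAt (cdk a b) (xk, y₂)).trace < 0 := by
    rw [trace_jacobianAt_cdk_of_stationary hcirc hline ha.ne']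
    exact mul_neg_of_neg_of_pos (neg_neg_of_pos (div_pos (by linarith) ha)) hy
  have hdet : 0 < (jacobianAt (cdk a b) (xk, y₂)).det := by
    rw [det_jacobianAt_cdk_of_stationary hcirc hline]
    exact mul_pos (mul_pos (mul_pos two_pos (hx ▸ hrad)) hy) (by linarith)
  exact ⟨htr, hdet, fun z hz => Complex.re_neg_of_sq_sub_mul_add_eq_zero htr hdet hz⟩

/-- for `b > 1 > a`, the Jacobian at `s₃` and `s₄` has negative
trace and positive determinant; hence every (real or complex) eigenvalue, i.e.
every complex root of the characteristic polynomial `z² − (tr J)z + det J`,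
has strictly negative real part, so `s₃` and `s₄` are attracting. -/
theorem cdk_s34_attracting (a b : ℝ) (ha : 0 < a) (hb : 0 < b)
    (hab : 1 < b ∧ a < 1)
    (y₂ : ℝ) (hy₂ : y₂ = -(b - 1) / (a - b)) (xk : ℝ)
    (hxk : xk = Real.sqrt (y₂ / a - y₂ ^ 2) ∨ xk = -Real.sqrt (y₂ / a - y₂ ^ 2)) :
    (jacobianAt (cdk a b) (xk, y₂)).trace < 0 ∧
    0 < (jacobianAt (cdk a b) (xk, y₂)).det ∧
      ∀ z : ℂ, z ^ 2 - ((jacobianAt (cdk a b) (xk, y₂)).trace : ℂ) * z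
          + ((jacobianAt (cdk a b) (xk, y₂)).det : ℂ) = 0 → z.re < 0 :=
  cdk_s34_attracting_general a b ha hab y₂ hy₂ xk hxk
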